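/- arXiv:1407.7787 — 2 statements merged into one kernel-verified Lean document; each statement's English description precedes it below -/
import Mathlib

section
/- Let (X,T) be a topological dynamical system, ι a continuous involution on X commuting with T, and (X̄,T̄) the halved system. Suppose there is a real number λ > 0 such that limsup_{n→∞} (1/n)·log F_T(n) = λ. Then λ ≤ limsup_{n→∞} (1/n)·log F_{T̄}(n) ≤ 2λ. -/
open Function

/-- `F_T(n)`: the number of points of period `n`, i.e. of `x` with `T^[n] x = x`. -/
noncomputable def numPer {X : Type*} (T : X → X) (n : ℕ) : ℕ :=
  Nat.card {x : X // T^[n] x = x}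

/-- `τ` is a closed orbit of length `n` under `T`: a set of the form
`{x, T x, …, T^[n-1] x}` of cardinality exactly `n` with `T^[n] x = x`. -/
def IsClosedOrbit {X : Type*} (T : X → X) (n : ℕ) (τ : Set X) : Prop :=
  ∃ x : X, T^[n] x = x ∧ τ = {y | ∃ k < n, T^[k] x = y} ∧ τ.ncard = n

/-- `O_T(n)`: the number of closed orbits of length `n` under `T`. -/
noncomputable def numOrb {X : Type*} (T : X → X) (n : ℕ) : ℕ :=
  Nat.card {τ : Set X // IsClosedOrbit T n τ}

/-- The quotient `X̄` of `X` by the equivalence relation `x ∼ ι x`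
(it carries the quotient topology). -/
abbrev HalfQuot {X : Type*} (ι : X → X) : Type _ := Quot (fun x y : X => ι x = y)

/-- The quotient map `π : X → X̄`. -/
abbrev halfProj {X : Type*} (ι : X → X) : X → HalfQuot ι := Quot.mk _

section Aux

variable {X : Type*} {ι : X → X}

lemma aux_proj_eq_iff (hinv : ι ∘ ι = id) (x y : X) :
    halfProj ι x = halfProj ι y ↔ x = y ∨ ι x = y := by
  have hii : ∀ z : X, ι (ι z) = z := fun z => congrFun hinv z
  constructor
  · intro h
    have h2 := Quot.eq.mp h
    clear h
    induction h2 with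
    | rel a b hab => exact Or.inr hab
    | refl a => exact Or.inl rfl
    | symm a b _ ih =>
      rcases ih with rfl | rfl
      · exact Or.inl rfl
      · exact Or.inr (hii a)
    | trans a b c _ _ ih1 ih2 =>
      rcases ih1 with rfl | rfl
      · exact ih2
      · rcases ih2 with rfl | h
        · exact Or.inr rfl
        · exact Or.inl ((hii a).symm.trans h)
  · rintro (rfl | rfl)
    · rfl
    · exact Quot.sound rfl

lemma aux_iter_bar {T : X → X} {Tbar : HalfQuot ι → HalfQuot ι}
    (hTbar : ∀ x : X, Tbar (halfProj ι x) = halfProj ι (T x)) (n : ℕ) (x : X) :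
    Tbar^[n] (halfProj ι x) = halfProj ι (T^[n] x) := by
  induction n generalizing x with
  | zero => rfl
  | succ n ih =>
    rw [Function.iterate_succ_apply, hTbar, ih, Function.iterate_succ_apply]

lemma aux_comm_iter {T : X → X} (hcomm : ι ∘ T = T ∘ ι) (n : ℕ) (x : X) :
    ι (T^[n] x) = T^[n] (ι x) := by
  induction n generalizing x with
  | zero => rfl
  | succ n ih =>
    have hc := congrFun hcomm x
    simp only [Function.comp_apply] at hc
    rw [Function.iterate_succ_apply, Function.iterate_succ_apply, ih, hc]

lemma aux_fix_char {T : X → X} {Tbar : HalfQuot ι → HalfQuot ι}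
    (hinv : ι ∘ ι = id)
    (hTbar : ∀ x : X, Tbar (halfProj ι x) = halfProj ι (T x)) (n : ℕ) (x : X) :
    Tbar^[n] (halfProj ι x) = halfProj ι x ↔ (T^[n] x = x ∨ T^[n] x = ι x) := by
  have hii : ∀ z : X, ι (ι z) = z := fun z => congrFun hinv z
  rw [aux_iter_bar hTbar, aux_proj_eq_iff hinv]
  constructor
  · rintro (h | h)
    · exact Or.inl h
    · refine Or.inr ?_
      have h2 := congrArg ι h
      rw [hii] at h2
      exact h2
  · rintro (h | h)
    · exact Or.inl h
    · exact Or.inr (by rw [h, hii])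

lemma aux_per2n {T : X → X} (hinv : ι ∘ ι = id) (hcomm : ι ∘ T = T ∘ ι)
    (n : ℕ) (x : X) (h : T^[n] x = ι x) : T^[2 * n] x = x := by
  have hii : ∀ z : X, ι (ι z) = z := fun z => congrFun hinv z
  have : 2 * n = n + n := by ring
  rw [this, Function.iterate_add_apply, h, ← aux_comm_iter hcomm, h, hii]

end Aux

theorem statement10
    {X : Type*} [MetricSpace X] [CompactSpace X]
    (T : X ≃ₜ X) (hfix : ∃ x : X, T x = x)
    (hfin : ∀ n : ℕ, 1 ≤ n → {x : X | (⇑T)^[n] x = x}.Finite)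
    (ι : X → X) (hcont : Continuous ι) (hinv : ι ∘ ι = id)
    (hcomm : ι ∘ ⇑T = ⇑T ∘ ι)
    (Tbar : HalfQuot ι → HalfQuot ι)
    (hTbar : ∀ x : X, Tbar (halfProj ι x) = halfProj ι (T x))
    :
    ∀ lam : ℝ, 0 < lam →
      Filter.limsup (fun n : ℕ => Real.log (numPer (⇑T) n) / n) Filter.atTop = lam →
      lam ≤ Filter.limsup (fun n : ℕ => Real.log (numPer Tbar n) / n) Filter.atTop ∧
      Filter.limsup (fun n : ℕ => Real.log (numPer Tbar n) / n) Filter.atTop ≤ 2 * lam := by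
  intro lam hlam hlim
  classical
  obtain ⟨x₀, hx₀⟩ := hfix
  set f : ℕ → ℝ := fun n => Real.log (numPer (⇑T) n) / n with hf
  set g : ℕ → ℝ := fun n => Real.log (numPer Tbar n) / n with hg
  have hii : ∀ z : X, ι (ι z) = z := fun z => congrFun hinv z
  -- finiteness of period sets in the quotient
  have finBar : ∀ n : ℕ, 1 ≤ n → Finite {q : HalfQuot ι // Tbar^[n] q = q} := by
    intro n hn
    have hsub : {q : HalfQuot ι | Tbar^[n] q = q} ⊆
        halfProj ι '' ({x : X | (⇑T)^[n] x = x} ∪ {x : X | (⇑T)^[2 * n] x = x}) := by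
      intro q hq
      obtain ⟨x, rfl⟩ := Quot.exists_rep q
      have := (aux_fix_char hinv hTbar n x).mp hq
      rcases this with h | h
      · exact ⟨x, Or.inl h, rfl⟩
      · exact ⟨x, Or.inr (aux_per2n hinv hcomm n x h), rfl⟩
    have hfin2 : ({x : X | (⇑T)^[n] x = x} ∪ {x : X | (⇑T)^[2 * n] x = x}).Finite :=
      (hfin n hn).union (hfin (2 * n) (by omega))
    exact ((hfin2.image _).subset hsub).to_subtype
  have finPer : ∀ n : ℕ, 1 ≤ n → Finite {x : X // (⇑T)^[n] x = x} := fun n hn =>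
    (hfin n hn).to_subtype
  -- positivity of the counts
  have posPer : ∀ n : ℕ, 1 ≤ n → 0 < numPer (⇑T) n := by
    intro n hn
    have := finPer n hn
    have : Nonempty {x : X // (⇑T)^[n] x = x} := ⟨⟨x₀, Function.iterate_fixed hx₀ n⟩⟩
    exact Nat.card_pos
  have posBar : ∀ n : ℕ, 1 ≤ n → 0 < numPer Tbar n := by
    intro n hn
    have := finBar n hn
    have : Nonempty {q : HalfQuot ι // Tbar^[n] q = q} :=
      ⟨⟨halfProj ι x₀, (aux_fix_char hinv hTbar n x₀).mpr
        (Or.inl (Function.iterate_fixed hx₀ n))⟩⟩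
    exact Nat.card_pos
  -- (A) numPer T n ≤ 2 * numPer Tbar n
  letI : LinearOrder X := IsWellOrder.linearOrder WellOrderingRel
  have cardA : ∀ n : ℕ, 1 ≤ n → numPer (⇑T) n ≤ 2 * numPer Tbar n := by
    intro n hn
    have := finBar n hn
    have key : Function.Injective
        (fun x : {x : X // (⇑T)^[n] x = x} =>
          ((⟨halfProj ι x.1, (aux_fix_char hinv hTbar n x.1).mpr (Or.inl x.2)⟩ :
            {q : HalfQuot ι // Tbar^[n] q = q}), decide (x.1 ≤ ι x.1))) := by
      rintro ⟨x, hx⟩ ⟨y, hy⟩ hxy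
      simp only [Prod.mk.injEq, Subtype.mk.injEq] at hxy
      obtain ⟨h1, h2⟩ := hxy
      rcases (aux_proj_eq_iff hinv x y).mp h1 with rfl | rfl
      · rfl
      · rw [hii x] at h2
        rw [decide_eq_decide] at h2
        rcases le_total x (ι x) with h | h
        · have := le_antisymm h (h2.mp h)
          simp [← this]
        · have := le_antisymm h (h2.mpr h)
          simp [this]
    calc numPer (⇑T) n ≤ Nat.card ({q : HalfQuot ι // Tbar^[n] q = q} × Bool) :=
          Nat.card_le_card_of_injective _ key
      _ = numPer Tbar n * 2 := by rw [Nat.card_prod]; simp [numPer]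
      _ = 2 * numPer Tbar n := by ring
  -- (B) numPer Tbar n ≤ numPer T (2n)
  have cardB : ∀ n : ℕ, 1 ≤ n → numPer Tbar n ≤ numPer (⇑T) (2 * n) := by
    intro n hn
    have : Finite {x : X // (⇑T)^[2 * n] x = x} := finPer (2 * n) (by omega)
    have key : Function.Injective
        (fun q : {q : HalfQuot ι // Tbar^[n] q = q} =>
          (⟨q.1.out, by
            have hout : halfProj ι q.1.out = q.1 := Quot.out_eq q.1
            have hfix' : Tbar^[n] (halfProj ι q.1.out) = halfProj ι q.1.out := by
              rw [hout]; exact q.2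
            rcases (aux_fix_char hinv hTbar n _).mp hfix' with h | h
            · have : 2 * n = n + n := by ring
              rw [this, Function.iterate_add_apply, h, h]
            · exact aux_per2n hinv hcomm n _ h⟩ :
            {x : X // (⇑T)^[2 * n] x = x})) := by
      rintro ⟨q1, h1⟩ ⟨q2, h2⟩ hq
      simp only [Subtype.mk.injEq] at hq
      have : q1 = q2 := by rw [← Quot.out_eq q1, ← Quot.out_eq q2, hq]
      exact Subtype.ext this
    exact Nat.card_le_card_of_injective _ key
  -- real-analytic part
  have hf_nonneg : ∀ n : ℕ, 1 ≤ n → 0 ≤ f n := by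
    intro n hn
    apply div_nonneg _ (by positivity)
    apply Real.log_nonneg
    exact_mod_cast posPer n hn
  have hg_nonneg : ∀ n : ℕ, 1 ≤ n → 0 ≤ g n := by
    intro n hn
    apply div_nonneg _ (by positivity)
    apply Real.log_nonneg
    exact_mod_cast posBar n hn
  have ineq2 : ∀ n : ℕ, 1 ≤ n → f n ≤ Real.log 2 / n + g n := by
    intro n hn
    have hlog : Real.log (numPer (⇑T) n) ≤ Real.log 2 + Real.log (numPer Tbar n) := by
      rw [← Real.log_mul (by norm_num) (by exact_mod_cast (posBar n hn).ne')]
      apply Real.log_le_log (by exact_mod_cast posPer n hn)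
      exact_mod_cast cardA n hn
    have hn' : (0:ℝ) < n := by exact_mod_cast hn
    calc f n = Real.log (numPer (⇑T) n) / n := rfl
      _ ≤ (Real.log 2 + Real.log (numPer Tbar n)) / n := by gcongr
      _ = Real.log 2 / n + g n := by rw [add_div]
  have ineq3 : ∀ n : ℕ, 1 ≤ n → g n ≤ 2 * f (2 * n) := by
    intro n hn
    have hlog : Real.log (numPer Tbar n) ≤ Real.log (numPer (⇑T) (2 * n)) := by
      apply Real.log_le_log (by exact_mod_cast posBar n hn)
      exact_mod_cast cardB n hn
    have hn' : (0:ℝ) < n := by exact_mod_cast hn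
    have h2n : ((2 * n : ℕ) : ℝ) = 2 * (n : ℝ) := by push_cast; ring
    calc g n = Real.log (numPer Tbar n) / n := rfl
      _ ≤ Real.log (numPer (⇑T) (2 * n)) / n := by gcongr
      _ = 2 * (Real.log (numPer (⇑T) (2 * n)) / ((2 * n : ℕ) : ℝ)) := by
          rw [h2n]; field_simp
      _ = 2 * f (2 * n) := rfl
  -- boundedness of f
  have hBf : Filter.IsBoundedUnder (· ≤ ·) Filter.atTop f := by
    by_contra hB
    have hempty : {a : ℝ | ∀ᶠ n in Filter.atTop, f n ≤ a} = ∅ := by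
      ext a
      simp only [Set.mem_setOf_eq, Set.mem_empty_iff_false, iff_false]
      intro ha
      exact hB ⟨a, by simpa [Filter.eventually_map] using ha⟩
    rw [Filter.limsup_eq, hempty, Real.sInf_empty] at hlim
    linarith
  have hCf : Filter.IsCoboundedUnder (· ≤ ·) Filter.atTop f :=
    Filter.isCoboundedUnder_le_of_eventually_le Filter.atTop
      (Filter.eventually_atTop.mpr ⟨1, fun n hn => hf_nonneg n hn⟩)
  have hCg : Filter.IsCoboundedUnder (· ≤ ·) Filter.atTop g :=
    Filter.isCoboundedUnder_le_of_eventually_le Filter.atTop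
      (Filter.eventually_atTop.mpr ⟨1, fun n hn => hg_nonneg n hn⟩)
  have htend2 : Filter.Tendsto (fun n : ℕ => 2 * n) Filter.atTop Filter.atTop :=
    Filter.tendsto_atTop_mono (fun n => by change n ≤ 2 * n; omega) Filter.tendsto_id
  have hBg : Filter.IsBoundedUnder (· ≤ ·) Filter.atTop g := by
    obtain ⟨b, hb⟩ := hBf
    have hb' : ∀ᶠ n in Filter.atTop, f n ≤ b := by
      simpa [Filter.eventually_map] using hb
    have hb2 : ∀ᶠ n in Filter.atTop, f (2 * n) ≤ b := htend2.eventually hb'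
    refine ⟨2 * b, ?_⟩
    rw [Filter.eventually_map]
    filter_upwards [hb2, Filter.eventually_ge_atTop 1] with n h1 h2
    calc g n ≤ 2 * f (2 * n) := ineq3 n h2
      _ ≤ 2 * b := by linarith
  constructor
  · -- lower bound
    rw [← hlim] at *
    apply le_of_forall_sub_le
    intro ε hε
    apply Filter.le_limsup_of_frequently_le _ hBg
    have hfreq : ∃ᶠ n in Filter.atTop, Filter.limsup f Filter.atTop - ε / 2 < f n :=
      Filter.frequently_lt_of_lt_limsup hCf (by linarith)
    have hev : ∀ᶠ n : ℕ in Filter.atTop, Real.log 2 / n ≤ ε / 2 := by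
      apply (tendsto_const_div_atTop_nhds_zero_nat (Real.log 2)).eventually_le_const
      linarith
    apply (hfreq.and_eventually (hev.and (Filter.eventually_ge_atTop 1))).mono
    rintro n ⟨h1, h2, h3⟩
    have := ineq2 n h3
    linarith
  · -- upper bound
    apply le_of_forall_sub_le
    intro ε hε
    rw [sub_le_iff_le_add]
    apply Filter.limsup_le_of_le hCg
    have hev1 : ∀ᶠ n in Filter.atTop, f n < lam + ε / 2 :=
      Filter.eventually_lt_of_limsup_lt (by rw [hlim]; linarith) hBf
    have hev2 : ∀ᶠ n in Filter.atTop, f (2 * n) < lam + ε / 2 := htend2.eventually hev1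
    filter_upwards [hev2, Filter.eventually_ge_atTop 1] with n h1 h2
    calc g n ≤ 2 * f (2 * n) := ineq3 n h2
      _ ≤ 2 * lam + ε := by linarith
end

section
/- Let (a_n) be a sequence of non-negative integers with a_1 ≥ 1 such that there is an integer N ≥ 1 with a_{2n} ≥ (1/2)·a_n for all n ≥ N. Let (b_n) be any sequence of integers such that b_1 > (1/2)·a_1, and (1/2)·a_n ≤ b_n ≤ a_n for n < N, and (1/2)·a_n ≤ b_n ≤ a_{2n} for n ≥ N. Then there exist a topological dynamical system (X,T) and a continuous involution ι : X → X commuting with T such that O_T(n) = a_n and O_{T̄}(n) = b_n for all n ≥ 1, where (X̄,T̄) is the halved system. -/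
open Function

/-!
The system is the one-point compactification of a countable discrete union of cycles, with `∞`
as the required fixed point; any permutation of the cycles extends to a homeomorphism. The
involution either fixes a cycle of length `n` pointwise, or swaps two cycles of length `n`, or
turns a cycle of length `2 n` by half a turn; each gives one closed orbit of length `n` downstairs.
With `c n` fixed cycles and `p n` swapped pairs of length `n`, and `d n` half-turn cycles of
length `2 n`, we get `O_T(n) = c n + 2 p n + d (n / 2) + [n = 1]` (the `d` term only for even `n`)
and `O_T̄(n) = c n + p n + d n + [n = 1]`. Solving for `c, p, d ≥ 0` is a recursion in `n`: take
`d n = 0` below `N`, and above `N` the least value keeping `p n ≥ 0`. The bounds on `b` then keep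
`c n ≥ 0`, and `b n ≤ a (2 n)` leaves room for the `d n` half-turn cycles of length `2 n`.
-/

lemma Nat.card_plift_eq_ite (P : Prop) [Decidable P] : Nat.card (PLift P) = if P then 1 else 0 := by
  split_ifs with h <;> simp [h]

section ClosedOrbits

variable {X I : Type*} {S : X → X} {n : ℕ}

lemma range_iterate_iterate_of_isPeriodicPt {x : X} (hx : IsPeriodicPt S n x) (hn : 0 < n)
    (k : ℕ) : Set.range (fun m => S^[m] (S^[k] x)) = Set.range (fun m => S^[m] x) := by
  ext y
  constructor
  · rintro ⟨m, rfl⟩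
    exact ⟨m + k, iterate_add_apply S m k x⟩
  · rintro ⟨m, rfl⟩
    refine ⟨m + (n - 1) * k, ?_⟩
    have hnk : (n - 1) * k + k = n * k := by
      rw [← Nat.succ_mul, Nat.succ_eq_add_one, Nat.sub_add_cancel hn]
    dsimp only
    rw [← iterate_add_apply, add_assoc, hnk, iterate_add_apply, (hx.mul_const k).eq]

lemma image_iterate_Iio_minimalPeriod (x : X) (hx : 0 < minimalPeriod S x) :
    (fun k => S^[k] x) '' Set.Iio (minimalPeriod S x) = Set.range (fun m => S^[m] x) := by
  refine (Set.image_subset_range _ _).antisymm ?_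
  rintro _ ⟨m, rfl⟩
  exact ⟨m % minimalPeriod S x, Nat.mod_lt m hx, iterate_mod_minimalPeriod_eq⟩

lemma isClosedOrbit_iff (hn : 0 < n) {τ : Set X} :
    IsClosedOrbit S n τ ↔ ∃ x, minimalPeriod S x = n ∧ τ = Set.range (fun m => S^[m] x) := by
  constructor
  · rintro ⟨x, hxn, rfl, hcard⟩
    have hpos : 0 < minimalPeriod S x := IsPeriodicPt.minimalPeriod_pos hn hxn
    have hrange := image_iterate_Iio_minimalPeriod x hpos
    have hle : n ≤ minimalPeriod S x := by
      calc n = ((fun k => S^[k] x) '' Set.Iio n).ncard := hcard.symm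
        _ ≤ (Set.range fun m => S^[m] x).ncard :=
          Set.ncard_le_ncard (Set.image_subset_range _ _) (hrange ▸ (Set.finite_Iio _).image _)
        _ = ((fun k => S^[k] x) '' Set.Iio (minimalPeriod S x)).ncard := by rw [hrange]
        _ ≤ (Set.Iio (minimalPeriod S x)).ncard := Set.ncard_image_le (Set.finite_Iio _)
        _ = minimalPeriod S x := by simp
    have hmin : minimalPeriod S x = n := le_antisymm (IsPeriodicPt.minimalPeriod_le hn hxn) hle
    refine ⟨x, hmin, ?_⟩
    rw [← hrange, hmin]
    rfl
  · rintro ⟨x, hx, rfl⟩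
    have hpos : 0 < minimalPeriod S x := hx ▸ hn
    have himage := image_iterate_Iio_minimalPeriod x hpos
    rw [hx] at himage
    refine ⟨x, hx ▸ iterate_minimalPeriod, himage.symm, ?_⟩
    have hinj : Set.InjOn (fun k => S^[k] x) (Set.Iio n) := hx ▸ iterate_injOn_Iio_minimalPeriod
    rw [← himage, hinj.ncard_image]
    simp

theorem numOrb_eq_card_of_reps {Λ : Type*} (hn : 0 < n) (g : I → X) (label : X → Λ)
    (hlabel : label ∘ S = label) (hg : Injective (label ∘ g))
    (hper : ∀ i, minimalPeriod S (g i) = n)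
    (hcover : ∀ x, minimalPeriod S x = n → ∃ i k, S^[k] (g i) = x) :
    numOrb S n = Nat.card I := by
  let orbit : I → {τ : Set X // IsClosedOrbit S n τ} := fun i =>
    ⟨Set.range (fun m => S^[m] (g i)), (isClosedOrbit_iff hn).2 ⟨g i, hper i, rfl⟩⟩
  have hbij : Bijective orbit := by
    constructor
    · intro i j hij
      obtain ⟨k, hk⟩ : g j ∈ (orbit i : Set X) := hij ▸ ⟨0, rfl⟩
      exact hg (by
        rw [comp_apply, comp_apply, ← hk]; exact (congrFun (iterate_invariant hlabel k) _).symm)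
    · rintro ⟨τ, hτ⟩
      obtain ⟨x, hx, rfl⟩ := (isClosedOrbit_iff hn).1 hτ
      obtain ⟨i, k, rfl⟩ := hcover x hx
      have hgi : IsPeriodicPt S n (g i) := hper i ▸ isPeriodicPt_minimalPeriod S (g i)
      exact ⟨i, Subtype.ext (range_iterate_iterate_of_isPeriodicPt hgi hn k).symm⟩
  exact (Nat.card_congr (Equiv.ofBijective orbit hbij)).symm

lemma minimalPeriod_eq_of_isPeriodicPt_iff {x : X} {m : ℕ} (h : ∀ k, IsPeriodicPt S k x ↔ m ∣ k) :
    minimalPeriod S x = m :=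
  Nat.dvd_antisymm (isPeriodicPt_iff_minimalPeriod_dvd.1 ((h m).2 dvd_rfl))
    ((h _).1 (isPeriodicPt_minimalPeriod S x))

end ClosedOrbits

section Halving

variable {X : Type*} {T ι : X → X}

lemma halfProj_eq_iff (hι : Involutive ι) {x y : X} :
    halfProj ι x = halfProj ι y ↔ x = y ∨ ι x = y := by
  have hequiv : Equivalence fun x y : X => x = y ∨ ι x = y :=
    ⟨fun _ => Or.inl rfl, fun {x y} => by rintro (rfl | rfl) <;> simp [hι _],
      fun {x y z} => by rintro (rfl | rfl) (rfl | rfl) <;> simp [hι _]⟩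
  refine ⟨fun h => hequiv.eqvGen_iff.1 ((Quot.eqvGen_exact h).mono fun _ _ => Or.inr), ?_⟩
  rintro (rfl | rfl)
  exacts [rfl, Quot.sound rfl]

def halfMap (T ι : X → X) (h : ι ∘ T = T ∘ ι) : HalfQuot ι → HalfQuot ι :=
  Quot.lift (fun x => halfProj ι (T x)) fun x _ hxy => hxy ▸ Quot.sound (congrFun h x)

lemma halfMap_iterate (h : ι ∘ T = T ∘ ι) (k : ℕ) (x : X) :
    (halfMap T ι h)^[k] (halfProj ι x) = halfProj ι (T^[k] x) := by
  have hsemi : Semiconj (halfProj ι) T (halfMap T ι h) := fun _ => rfl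
  exact (hsemi.iterate_right k x).symm

lemma isPeriodicPt_halfMap_iff (hι : Involutive ι) (h : ι ∘ T = T ∘ ι) (k : ℕ) (x : X) :
    IsPeriodicPt (halfMap T ι h) k (halfProj ι x) ↔ T^[k] x = x ∨ ι (T^[k] x) = x := by
  rw [IsPeriodicPt, IsFixedPt, halfMap_iterate, halfProj_eq_iff hι]

end Halving

namespace OnePoint

variable {X Y : Type*}

lemma map_iterate (f : X → X) (k : ℕ) : (OnePoint.map f)^[k] = OnePoint.map f^[k] := by
  induction k with
  | zero => exact map_id.symm
  | succ k ih => rw [iterate_succ, ih, iterate_succ, map_comp]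

lemma involutive_map {f : X → X} (hf : Involutive f) : Involutive (OnePoint.map f) := fun x =>
  congrFun (show OnePoint.map f ∘ OnePoint.map f = id by rw [← map_comp, hf.comp_self, map_id]) x

lemma minimalPeriod_map_coe (f : X → X) (x : X) :
    minimalPeriod (OnePoint.map f) (x : OnePoint X) = minimalPeriod f x :=
  minimalPeriod_eq_minimalPeriod_iff.2 fun k => by
    rw [IsPeriodicPt, IsFixedPt, map_iterate, map_some, coe_eq_coe]; rfl

lemma minimalPeriod_map_infty (f : X → X) : minimalPeriod (OnePoint.map f) ∞ = 1 :=
  minimalPeriod_eq_one_iff_isFixedPt.2 (map_infty f)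

lemma finite_setOf_isPeriodicPt_map {f : X → X} {k : ℕ} (hf : {x | IsPeriodicPt f k x}.Finite) :
    {x | IsPeriodicPt (OnePoint.map f) k x}.Finite := by
  refine ((hf.image ((↑) : X → OnePoint X)).insert ∞).subset ?_
  intro x hx
  induction x using OnePoint.rec with
  | infty => exact Set.mem_insert _ _
  | coe x =>
    refine Set.mem_insert_of_mem _ ⟨x, ?_, rfl⟩
    simpa [IsPeriodicPt, IsFixedPt, map_iterate] using hx

variable [TopologicalSpace X] [TopologicalSpace Y] [DiscreteTopology X] [DiscreteTopology Y]

lemma continuous_map_of_injective {f : X → Y} (hf : Injective f) : Continuous (OnePoint.map f) :=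
  continuous_map_iff.2 ⟨continuous_of_discreteTopology, by
    simpa only [Filter.coclosedCompact_eq_cocompact, Filter.cocompact_eq_cofinite]
      using hf.tendsto_cofinite⟩

lemma metrizableSpace_of_countable [Countable X] :
    TopologicalSpace.MetrizableSpace (OnePoint X) := by
  obtain ⟨e, he⟩ := exists_injective_nat X
  have hinj : Injective (OnePoint.map e) := by
    intro x y h
    induction x using OnePoint.rec <;> induction y using OnePoint.rec <;> simp_all [he.eq_iff]
  exact ((continuous_map_of_injective he).isClosedEmbedding hinj).isEmbedding.metrizableSpace

end OnePoint

section CycleModel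

def atHalf (d : ℕ → ℕ) (n : ℕ) : ℕ := if 2 ∣ n then d (n / 2) else 0

lemma atHalf_two_mul (d : ℕ → ℕ) (n : ℕ) : atHalf d (2 * n) = d n := by
  simp [atHalf]

lemma atHalf_le {a d : ℕ → ℕ} {n : ℕ} (h : ∀ m, 2 * m = n → d m ≤ a (2 * m)) :
    atHalf d n ≤ a n := by
  unfold atHalf
  split_ifs with h2
  · obtain ⟨m, rfl⟩ := h2
    simpa using h m rfl
  · exact Nat.zero_le _

lemma two_dvd_of_fin_atHalf {d : ℕ → ℕ} {n : ℕ} (j : Fin (atHalf d n)) : 2 ∣ n := by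
  by_contra h
  simp only [atHalf, h, if_false] at j
  exact j.elim0

lemma two_mul_dvd_or_two_mul_dvd_add_iff (h k : ℕ) : 2 * h ∣ k ∨ 2 * h ∣ k + h ↔ h ∣ k := by
  constructor
  · rintro (hk | hk)
    · exact (Dvd.intro_left 2 rfl).trans hk
    · exact Nat.dvd_add_self_right.1 ((Dvd.intro_left 2 rfl).trans hk)
  · rintro ⟨t, rfl⟩
    rcases Nat.even_or_odd' t with ⟨s, rfl | rfl⟩
    · exact Or.inl ⟨s, by ring⟩
    · exact Or.inr ⟨s + 1, by ring⟩

variable (c p d : ℕ → ℕ)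

abbrev CycleKind (n : ℕ) : Type := Fin (c n) ⊕ Fin (p n) × Bool ⊕ Fin (atHalf d n)

/-- The point at position `pos` on the cycle `kind` of length `len`. `invol` fixes the cycles of
the first kind pointwise, swaps the two cycles of each pair of the second kind (told apart by the
`Bool`), and turns the cycles of the third kind by half a turn. -/
structure CyclePt where
  len : ℕ
  kind : CycleKind c p d len
  pos : ZMod len

namespace CyclePt

variable {c p d}

instance : TopologicalSpace (CyclePt c p d) := ⊥

instance : DiscreteTopology (CyclePt c p d) := ⟨rfl⟩

instance : Countable (CyclePt c p d) := by
  have : ∀ n, Countable (ZMod n)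
    | 0 => inferInstanceAs (Countable ℤ)
    | n + 1 => inferInstanceAs (Countable (Fin (n + 1)))
  refine Injective.countable (f := fun x : CyclePt c p d =>
    (⟨x.len, x.kind, x.pos⟩ : Σ n, CycleKind c p d n × ZMod n)) ?_
  rintro ⟨n, κ, z⟩ ⟨n', κ', z'⟩ h
  simp only [Sigma.mk.injEq] at h
  obtain ⟨rfl, h⟩ := h
  simp_all

def shift : CyclePt c p d ≃ CyclePt c p d where
  toFun x := ⟨x.len, x.kind, x.pos + 1⟩
  invFun x := ⟨x.len, x.kind, x.pos - 1⟩
  left_inv x := by simp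
  right_inv x := by simp

lemma shift_iterate (k : ℕ) (x : CyclePt c p d) :
    (⇑shift)^[k] x = ⟨x.len, x.kind, x.pos + k⟩ := by
  induction k with
  | zero => simp
  | succ k ih =>
    rw [iterate_succ_apply', ih]
    simp [shift, add_assoc]

def invol : CyclePt c p d → CyclePt c p d
  | ⟨n, .inl j, z⟩ => ⟨n, .inl j, z⟩
  | ⟨n, .inr (.inl (j, b)), z⟩ => ⟨n, .inr (.inl (j, !b)), z⟩
  | ⟨n, .inr (.inr j), z⟩ => ⟨n, .inr (.inr j), z + (n / 2 : ℕ)⟩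

lemma involutive_invol : Involutive (invol : CyclePt c p d → CyclePt c p d) := by
  rintro ⟨n, j | ⟨j, b⟩ | j, z⟩
  · rfl
  · simp [invol]
  · obtain ⟨h, rfl⟩ := two_dvd_of_fin_atHalf j
    simp only [invol, add_assoc, ← Nat.cast_add]
    rw [show 2 * h / 2 + 2 * h / 2 = 2 * h by omega, ZMod.natCast_self, add_zero]

lemma invol_comp_shift : invol ∘ ⇑(shift : CyclePt c p d ≃ CyclePt c p d) = shift ∘ invol := by
  funext x
  rcases x with ⟨n, j | ⟨j, b⟩ | j, z⟩
  · rfl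
  · rfl
  · exact congrArg (mk n _) (add_right_comm _ _ _)

lemma isPeriodicPt_shift_iff (k : ℕ) (x : CyclePt c p d) :
    IsPeriodicPt shift k x ↔ x.len ∣ k := by
  obtain ⟨n, κ, z⟩ := x
  simp [IsPeriodicPt, IsFixedPt, shift_iterate, ZMod.natCast_eq_zero_iff]

lemma minimalPeriod_shift (x : CyclePt c p d) : minimalPeriod shift x = x.len :=
  minimalPeriod_eq_of_isPeriodicPt_iff (isPeriodicPt_shift_iff · x)

lemma finite_setOf_isPeriodicPt_shift {k : ℕ} (hk : 0 < k) :
    {x : CyclePt c p d | IsPeriodicPt shift k x}.Finite := by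
  have hfib : ∀ m ∈ (k.divisors : Set ℕ), (len ⁻¹' {m} : Set (CyclePt c p d)).Finite := by
    intro m hm
    have : NeZero m := ⟨Nat.ne_of_gt (Nat.pos_of_mem_divisors hm)⟩
    refine (Set.finite_range fun κz : CycleKind c p d m × ZMod m => mk m κz.1 κz.2).subset ?_
    rintro ⟨m, κ, z⟩ rfl
    exact ⟨(κ, z), rfl⟩
  refine (k.divisors.finite_toSet.preimage' hfib).subset fun x hx => ?_
  simpa [isPeriodicPt_shift_iff, hk.ne'] using hx

lemma shift_iterate_val (x : CyclePt c p d) (hx : 0 < x.len) :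
    (⇑shift)^[x.pos.val] ⟨x.len, x.kind, 0⟩ = x := by
  have : NeZero x.len := ⟨hx.ne'⟩
  rw [shift_iterate, zero_add, ZMod.natCast_zmod_val]

def barLen : CyclePt c p d → ℕ
  | ⟨n, .inl _, _⟩ => n
  | ⟨n, .inr (.inl _), _⟩ => n
  | ⟨n, .inr (.inr _), _⟩ => n / 2

lemma isPeriodicPt_or_invol_iff (k : ℕ) (x : CyclePt c p d) :
    (⇑shift)^[k] x = x ∨ invol ((⇑shift)^[k] x) = x ↔ x.barLen ∣ k := by
  rcases x with ⟨n, j | ⟨j, b⟩ | j, z⟩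
  · simp [shift_iterate, invol, barLen, ZMod.natCast_eq_zero_iff]
  · simp [shift_iterate, invol, barLen, ZMod.natCast_eq_zero_iff]
  · obtain ⟨h, rfl⟩ := two_dvd_of_fin_atHalf j
    rw [← two_mul_dvd_or_two_mul_dvd_add_iff]
    simp [shift_iterate, invol, barLen, add_assoc, ← Nat.cast_add, ZMod.natCast_eq_zero_iff]

open OnePoint

lemma map_invol_comp_map_shift :
    OnePoint.map invol ∘ OnePoint.map ⇑(shift : CyclePt c p d ≃ CyclePt c p d) =
      OnePoint.map shift ∘ OnePoint.map invol := by
  rw [← map_comp, ← map_comp, invol_comp_shift]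

variable (c p d) in
def shiftBar : HalfQuot (OnePoint.map (invol : CyclePt c p d → _)) →
    HalfQuot (OnePoint.map (invol : CyclePt c p d → _)) :=
  halfMap _ _ map_invol_comp_map_shift

lemma numOrb_map_shift {n : ℕ} (hn : 0 < n) :
    numOrb (OnePoint.map ⇑(shift : CyclePt c p d ≃ CyclePt c p d)) n =
      c n + 2 * p n + atHalf d n + if n = 1 then 1 else 0 := by
  let g : CycleKind c p d n ⊕ PLift (n = 1) → OnePoint (CyclePt c p d)
    | .inl κ => ↑(⟨n, κ, 0⟩ : CyclePt c p d)
    | .inr _ => ∞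
  have hlabel : OnePoint.map (fun x : CyclePt c p d => (⟨x.len, x.kind⟩ : Σ n, CycleKind c p d n))
      ∘ OnePoint.map shift = OnePoint.map (fun x => ⟨x.len, x.kind⟩) := by
    rw [← map_comp]; rfl
  rw [numOrb_eq_card_of_reps hn g _ hlabel]
  · rw [Nat.card_sum, Nat.card_plift_eq_ite]
    simp only [Nat.card_eq_fintype_card, Fintype.card_sum, Fintype.card_fin, Fintype.card_prod,
      Fintype.card_bool, Nat.add_right_cancel_iff]
    ring
  · rintro (κ | j) (κ' | j') h
    · simpa [g] using h
    · simp [g] at h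
    · simp [g] at h
    · exact congrArg _ (Subsingleton.elim j j')
  · rintro (κ | j)
    · exact (minimalPeriod_map_coe _ _).trans (minimalPeriod_shift _)
    · exact (minimalPeriod_map_infty _).trans j.down.symm
  · intro x hx
    induction x using OnePoint.rec with
    | infty =>
      rw [minimalPeriod_map_infty] at hx
      exact ⟨.inr ⟨hx.symm⟩, 0, rfl⟩
    | coe x =>
      rw [minimalPeriod_map_coe, minimalPeriod_shift] at hx
      obtain ⟨m, κ, w⟩ := x
      subst hx
      exact ⟨.inl κ, w.val, by simp [g, map_iterate, shift_iterate_val _ hn]⟩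

lemma minimalPeriod_shiftBar_coe (x : CyclePt c p d) :
    minimalPeriod (shiftBar c p d) (halfProj _ ↑x) = x.barLen :=
  minimalPeriod_eq_of_isPeriodicPt_iff fun k => by
    rw [shiftBar, isPeriodicPt_halfMap_iff (involutive_map involutive_invol), map_iterate,
      map_some, map_some, coe_eq_coe, coe_eq_coe, isPeriodicPt_or_invol_iff]

lemma minimalPeriod_shiftBar_infty : minimalPeriod (shiftBar c p d) (halfProj _ ∞) = 1 :=
  minimalPeriod_eq_one_iff_isFixedPt.2 rfl

lemma shiftBar_iterate_coe (k : ℕ) (x : CyclePt c p d) :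
    (shiftBar c p d)^[k] (halfProj _ ↑x) = halfProj _ ↑((⇑shift)^[k] x) := by
  rw [shiftBar, halfMap_iterate, map_iterate, map_some]

lemma shiftBar_iterate_val (x : CyclePt c p d) (hx : 0 < x.len) :
    (shiftBar c p d)^[x.pos.val] (halfProj _ ↑(⟨x.len, x.kind, 0⟩ : CyclePt c p d)) =
      halfProj _ ↑x := by
  rw [shiftBar_iterate_coe, shift_iterate_val x hx]

def forget (x : CyclePt c p d) : Σ m, Fin (c m) ⊕ Fin (p m) ⊕ Fin (atHalf d m) :=
  ⟨x.len, x.kind.map id (Sum.map Prod.fst id)⟩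

lemma forget_comp_invol : forget ∘ invol = (forget : CyclePt c p d → _) := by
  funext x
  rcases x with ⟨m, j | ⟨j, b⟩ | j, z⟩ <;> rfl

variable (c p d) in
def forgetBar : HalfQuot (OnePoint.map (invol : CyclePt c p d → _)) →
    OnePoint (Σ m, Fin (c m) ⊕ Fin (p m) ⊕ Fin (atHalf d m)) :=
  Quot.lift (OnePoint.map forget) fun x _ hx => by
    rw [← hx, ← comp_apply (f := OnePoint.map forget), ← map_comp, forget_comp_invol]

lemma forgetBar_comp_shiftBar : forgetBar c p d ∘ shiftBar c p d = forgetBar c p d := by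
  funext y
  induction y using Quot.ind
  exact congrFun (show OnePoint.map forget ∘ OnePoint.map shift = OnePoint.map forget by
    rw [← map_comp]; rfl) _

lemma forgetBar_coe (x : CyclePt c p d) : forgetBar c p d (halfProj _ ↑x) = ↑(forget x) := rfl

lemma forgetBar_infty : forgetBar c p d (halfProj _ ∞) = ∞ := rfl

variable (c p d) in
def orbitRepBar (n : ℕ) : Fin (c n) ⊕ Fin (p n) ⊕ Fin (atHalf d (2 * n)) ⊕ PLift (n = 1) →
    HalfQuot (OnePoint.map (invol : CyclePt c p d → _))
  | .inl j => halfProj _ ↑(⟨n, .inl j, 0⟩ : CyclePt c p d)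
  | .inr (.inl j) => halfProj _ ↑(⟨n, .inr (.inl (j, false)), 0⟩ : CyclePt c p d)
  | .inr (.inr (.inl j)) => halfProj _ ↑(⟨2 * n, .inr (.inr j), 0⟩ : CyclePt c p d)
  | .inr (.inr (.inr _)) => halfProj _ ∞

lemma minimalPeriod_orbitRepBar {n : ℕ}
    (i : Fin (c n) ⊕ Fin (p n) ⊕ Fin (atHalf d (2 * n)) ⊕ PLift (n = 1)) :
    minimalPeriod (shiftBar c p d) (orbitRepBar c p d n i) = n := by
  rcases i with j | j | j | j
  · exact minimalPeriod_shiftBar_coe _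
  · exact minimalPeriod_shiftBar_coe _
  · exact (minimalPeriod_shiftBar_coe _).trans (by simp [barLen])
  · exact minimalPeriod_shiftBar_infty.trans j.down.symm

lemma injective_forgetBar_comp_orbitRepBar {n : ℕ} (hn : 0 < n) :
    Injective (forgetBar c p d ∘ orbitRepBar c p d n) := by
  have h2n : 2 * n ≠ n := by omega
  rintro (j | j | j | j) (j' | j' | j' | j') h <;>
    simp only [orbitRepBar, comp_apply, forgetBar_coe, forgetBar_infty, forget] at h <;>
    simp_all [h2n.symm, ← PLift.down_inj]

lemma exists_iterate_orbitRepBar_eq {n : ℕ} (hn : 0 < n) (y : HalfQuot (OnePoint.map invol))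
    (hy : minimalPeriod (shiftBar c p d) y = n) :
    ∃ i k, (shiftBar c p d)^[k] (orbitRepBar c p d n i) = y := by
  obtain ⟨x, rfl⟩ := Quot.exists_rep y
  induction x using OnePoint.rec with
  | infty => exact ⟨.inr (.inr (.inr ⟨hy.symm.trans minimalPeriod_shiftBar_infty⟩)), 0, rfl⟩
  | coe x =>
    have hlen := (minimalPeriod_shiftBar_coe x).symm.trans hy
    rcases x with ⟨m, j | ⟨j, b⟩ | j, w⟩
    · obtain rfl : m = n := hlen
      exact ⟨.inl j, w.val, shiftBar_iterate_val ⟨_, .inl j, w⟩ hn⟩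
    · obtain rfl : m = n := hlen
      refine ⟨.inr (.inl j), w.val,
        (shiftBar_iterate_val ⟨_, .inr (.inl (j, false)), w⟩ hn).trans ?_⟩
      cases b
      exacts [rfl, Quot.sound rfl]
    · obtain ⟨h, rfl⟩ := two_dvd_of_fin_atHalf j
      obtain rfl : h = n := by simpa [barLen] using hlen
      exact ⟨.inr (.inr (.inl j)), w.val,
        shiftBar_iterate_val ⟨_, .inr (.inr j), w⟩ (by simpa using hn)⟩

lemma numOrb_shiftBar {n : ℕ} (hn : 0 < n) :
    numOrb (shiftBar c p d) n = c n + p n + d n + if n = 1 then 1 else 0 := by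
  rw [numOrb_eq_card_of_reps hn _ _ forgetBar_comp_shiftBar
    (injective_forgetBar_comp_orbitRepBar hn) minimalPeriod_orbitRepBar
    (exists_iterate_orbitRepBar_eq hn), Nat.card_sum, Nat.card_sum, Nat.card_sum,
    Nat.card_plift_eq_ite]
  simp [atHalf_two_mul, add_assoc]

end CyclePt

end CycleModel

section OrbitCounts

variable (a : ℕ → ℕ) (b : ℕ → ℤ) (N : ℕ)

/-- The number `d n` of half-turn cycles of length `2 n`. -/
def halfTurnCount : ℕ → ℕ
  | n => if _ : n < N ∨ n = 0 then 0 else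
      (b n - a n + if 2 ∣ n then (halfTurnCount (n / 2) : ℤ) else 0).toNat
termination_by n => n
decreasing_by omega

lemma halfTurnCount_eq (n : ℕ) : halfTurnCount a b N n =
    if n < N ∨ n = 0 then 0 else (b n - a n + atHalf (halfTurnCount a b N) n).toNat := by
  rw [halfTurnCount]
  simp only [dite_eq_ite, atHalf]
  split_ifs <;> simp

variable {a b N}
variable (hge : ∀ n, 1 ≤ n → N ≤ n → b n ≤ a (2 * n))

include hge in
lemma halfTurnCount_le (n : ℕ) : halfTurnCount a b N n ≤ a (2 * n) := by
  induction n using Nat.strong_induction_on with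
  | _ n ih =>
    rw [halfTurnCount_eq]
    split_ifs with hn
    · exact Nat.zero_le _
    · have hD : atHalf (halfTurnCount a b N) n ≤ a n := atHalf_le fun m hm => ih m (by omega)
      have := hge n (by omega) (by omega)
      omega

include hge in
lemma exists_orbit_counts (hlow : ∀ n, 1 ≤ n → a n ≤ 2 * b n)
    (hlt : ∀ n, 1 ≤ n → n < N → b n ≤ a n) :
    ∃ c p d : ℕ → ℕ, ∀ n, 1 ≤ n →
      (c n + 2 * p n + atHalf d n : ℤ) = a n ∧ (c n + p n + d n : ℤ) = b n := by
  set d := halfTurnCount a b N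
  refine ⟨fun n => (2 * (b n - d n) - (a n - atHalf d n)).toNat,
    fun n => ((a n - atHalf d n) - (b n - d n)).toNat, d, fun n hn => ?_⟩
  dsimp only
  have hD : atHalf d n ≤ a n := atHalf_le fun m _ => halfTurnCount_le hge m
  have hd : d n = if n < N ∨ n = 0 then 0 else (b n - a n + atHalf d n).toNat :=
    halfTurnCount_eq a b N n
  have hlow := hlow n hn
  have hbounds : (a n - atHalf d n : ℤ) ≤ 2 * (b n - d n) ∧ b n - d n ≤ (a n - atHalf d n : ℤ) := by
    rcases lt_or_ge n N with hnN | hnN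
    · have hlt := hlt n hn hnN
      have hD0 : atHalf d n = 0 := by
        unfold atHalf
        split_ifs
        · exact (halfTurnCount_eq a b N _).trans (if_pos (Or.inl (by omega)))
        · rfl
      rw [if_pos (Or.inl hnN)] at hd
      omega
    · have := hge n hn hnN
      rw [if_neg (by omega)] at hd
      omega
  omega

include hge in
lemma exists_orbit_counts_add_one (ha1 : 1 ≤ a 1) (hb1 : (a 1 : ℤ) < 2 * b 1)
    (hlow : ∀ n, 1 ≤ n → a n ≤ 2 * b n) (hlt : ∀ n, 1 ≤ n → n < N → b n ≤ a n) :
    ∃ c p d : ℕ → ℕ, ∀ n, 1 ≤ n →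
      (c n + 2 * p n + atHalf d n + if n = 1 then 1 else 0 : ℤ) = a n ∧
        (c n + p n + d n + if n = 1 then 1 else 0 : ℤ) = b n := by
  obtain ⟨c, p, d, hcount⟩ := exists_orbit_counts (a := fun n => a n - if n = 1 then 1 else 0)
    (b := fun n => b n - if n = 1 then 1 else 0) (N := N)
    (fun n hn hNn => by have := hge n hn hNn; split_ifs <;> omega)
    (fun n hn => by
      have := hlow n hn
      split_ifs with hn1
      · subst hn1; omega
      · omega)
    (fun n hn hnN => by have := hlt n hn hnN; split_ifs <;> omega)
  refine ⟨c, p, d, fun n hn => ?_⟩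
  have h := hcount n hn
  split_ifs at h ⊢ with hn1
  · subst hn1; omega
  · omega

end OrbitCounts

theorem exists_halvedSystem (c p d : ℕ → ℕ) :
    ∃ (X : Type) (_ : MetricSpace X) (_ : CompactSpace X) (T : X ≃ₜ X) (ι : X → X),
      Continuous ι ∧ ι ∘ ι = id ∧ ι ∘ ⇑T = ⇑T ∘ ι ∧ (∃ x : X, T x = x) ∧
      (∀ n : ℕ, 1 ≤ n → {x : X | (⇑T)^[n] x = x}.Finite) ∧
      (∀ n : ℕ, 1 ≤ n → numOrb (⇑T) n = c n + 2 * p n + atHalf d n + if n = 1 then 1 else 0) ∧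
      ∃ Tbar : HalfQuot ι → HalfQuot ι,
        (∀ x : X, Tbar (halfProj ι x) = halfProj ι (T x)) ∧
        (∀ n : ℕ, 1 ≤ n → numOrb Tbar n = c n + p n + d n + if n = 1 then 1 else 0) := by
  have := OnePoint.metrizableSpace_of_countable (X := CyclePt c p d)
  let T := (CyclePt.shift (c := c) (p := p) (d := d)).toHomeomorphOfDiscrete.onePointCongr
  have hT : ⇑T = OnePoint.map CyclePt.shift := funext (Homeomorph.onePointCongr_apply _)
  refine ⟨OnePoint (CyclePt c p d), TopologicalSpace.metrizableSpaceMetric _, inferInstance, T,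
    OnePoint.map CyclePt.invol,
    OnePoint.continuous_map_of_injective CyclePt.involutive_invol.injective,
    (OnePoint.involutive_map CyclePt.involutive_invol).comp_self,
    hT ▸ CyclePt.map_invol_comp_map_shift, ⟨OnePoint.infty, rfl⟩, fun n hn => ?_, fun n hn => ?_,
    CyclePt.shiftBar c p d, fun x => hT ▸ rfl, fun n hn => CyclePt.numOrb_shiftBar hn⟩
  · rw [hT]
    exact OnePoint.finite_setOf_isPeriodicPt_map (CyclePt.finite_setOf_isPeriodicPt_shift hn)
  · rw [hT]
    exact CyclePt.numOrb_map_shift hn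

theorem statement12_general (a : ℕ → ℕ) (ha1 : 1 ≤ a 1) (N : ℕ)
    (b : ℕ → ℤ) (hb1 : (1 / 2 : ℚ) * a 1 < (b 1 : ℚ))
    (hblt : ∀ n : ℕ, 1 ≤ n → n < N →
      (1 / 2 : ℚ) * a n ≤ (b n : ℚ) ∧ (b n : ℚ) ≤ (a n : ℚ))
    (hbge : ∀ n : ℕ, N ≤ n →
      (1 / 2 : ℚ) * a n ≤ (b n : ℚ) ∧ (b n : ℚ) ≤ (a (2 * n) : ℚ)) :
    ∃ (X : Type) (_ : MetricSpace X) (_ : CompactSpace X) (T : X ≃ₜ X) (ι : X → X),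
      Continuous ι ∧ ι ∘ ι = id ∧ ι ∘ ⇑T = ⇑T ∘ ι ∧ (∃ x : X, T x = x) ∧
      (∀ n : ℕ, 1 ≤ n → {x : X | (⇑T)^[n] x = x}.Finite) ∧
      (∀ n : ℕ, 1 ≤ n → numOrb (⇑T) n = a n) ∧
      ∃ Tbar : HalfQuot ι → HalfQuot ι,
        (∀ x : X, Tbar (halfProj ι x) = halfProj ι (T x)) ∧
        (∀ n : ℕ, 1 ≤ n → (numOrb Tbar n : ℤ) = b n) := by
  have hlow : ∀ n, 1 ≤ n → (a n : ℤ) ≤ 2 * b n := fun n hn => by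
    have h := (lt_or_ge n N).elim (fun h => (hblt n hn h).1) fun h => (hbge n h).1
    exact_mod_cast (by linarith : (a n : ℚ) ≤ 2 * b n)
  have hb1' : (a 1 : ℤ) < 2 * b 1 := by exact_mod_cast (by linarith : (a 1 : ℚ) < 2 * b 1)
  obtain ⟨c, p, d, hcount⟩ := exists_orbit_counts_add_one
    (fun n _ hNn => by exact_mod_cast (hbge n hNn).2) ha1 hb1' hlow
    (fun n hn hnN => by exact_mod_cast (hblt n hn hnN).2)
  obtain ⟨X, hX, hXc, T, ι, hι, hιι, hιT, hfix, hfin, hup, Tbar, hTbar, hdown⟩ :=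
    exists_halvedSystem c p d
  refine ⟨X, hX, hXc, T, ι, hι, hιι, hιT, hfix, hfin, fun n hn => ?_, Tbar, hTbar,
    fun n hn => ?_⟩
  · rw [hup n hn]
    exact_mod_cast (hcount n hn).1
  · rw [hdown n hn]
    exact_mod_cast (hcount n hn).2

theorem statement12 (a : ℕ → ℕ) (ha1 : 1 ≤ a 1) (N : ℕ) (hN : 1 ≤ N)
    (haN : ∀ n : ℕ, N ≤ n → (1 / 2 : ℚ) * a n ≤ (a (2 * n) : ℚ))
    (b : ℕ → ℤ) (hb1 : (1 / 2 : ℚ) * a 1 < (b 1 : ℚ))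
    (hblt : ∀ n : ℕ, 1 ≤ n → n < N →
      (1 / 2 : ℚ) * a n ≤ (b n : ℚ) ∧ (b n : ℚ) ≤ (a n : ℚ))
    (hbge : ∀ n : ℕ, N ≤ n →
      (1 / 2 : ℚ) * a n ≤ (b n : ℚ) ∧ (b n : ℚ) ≤ (a (2 * n) : ℚ)) :
    ∃ (X : Type) (_ : MetricSpace X) (_ : CompactSpace X) (T : X ≃ₜ X) (ι : X → X),
      Continuous ι ∧ ι ∘ ι = id ∧ ι ∘ ⇑T = ⇑T ∘ ι ∧ (∃ x : X, T x = x) ∧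
      (∀ n : ℕ, 1 ≤ n → {x : X | (⇑T)^[n] x = x}.Finite) ∧
      (∀ n : ℕ, 1 ≤ n → numOrb (⇑T) n = a n) ∧
      ∃ Tbar : HalfQuot ι → HalfQuot ι,
        (∀ x : X, Tbar (halfProj ι x) = halfProj ι (T x)) ∧
        (∀ n : ℕ, 1 ≤ n → (numOrb Tbar n : ℤ) = b n) :=
  statement12_general a ha1 N b hb1 hblt hbge
end
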